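/- The function f(ς, ε) = (1 + ς)² e^{−ε(1+ς)} satisfies the collision-induced breakage equation ∂f/∂ς(ς,ε) = ∫₀^∞ ∫_ε^∞ (ρσ)(2/ρ) f(ς,ρ) f(ς,σ) dρ dσ − ∫₀^∞ (ερ) f(ς,ε) f(ς,ρ) dρ for all ς ≥ 0 and ε > 0, with initial condition f(0, ε) = e^{−ε}. -/

import Mathlib

open MeasureTheory Set Real

/-
The solution separates as f(ς, ε) = a² e^{-aε} with a = 1 + ς. Both collision integrals are
then elementary: ∫_ε^∞ e^{-aρ} dρ = e^{-aε}/a and ∫_0^∞ σ e^{-aσ} dσ = 1/a², so the gain term is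
2a e^{-aε} and the loss term is ε a² e^{-aε}, which is exactly ∂_ς (a² e^{-aε}).
-/

lemma integral_exp_neg_mul_Ioi {a : ℝ} (ha : 0 < a) (c : ℝ) :
    ∫ ρ in Ioi c, exp (-ρ * a) = exp (-c * a) / a := by
  have h := integral_exp_mul_Ioi (neg_lt_zero.2 ha) c
  simp only [neg_mul_comm, mul_comm _ a] at h ⊢
  rw [h, div_neg, neg_div, neg_neg]

lemma integral_mul_exp_neg_mul_Ioi_zero {a : ℝ} (ha : 0 < a) :
    ∫ t in Ioi (0 : ℝ), t * exp (-t * a) = 1 / a ^ 2 := by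
  calc ∫ t in Ioi (0 : ℝ), t * exp (-t * a)
      = ∫ t in Ioi (0 : ℝ), t ^ ((2 : ℝ) - 1) * exp (-(a * t)) := by
        norm_num [mul_comm a]
    _ = 1 / a ^ 2 := by
        rw [integral_rpow_mul_exp_neg_mul_Ioi two_pos ha]
        norm_num

section CollisionIntegrals

variable {a : ℝ} (ha : 0 < a)
include ha

lemma gain_integral_exp {ε : ℝ} (hε : 0 ≤ ε) :
    ∫ σ in Ioi (0 : ℝ), ∫ ρ in Ioi ε,
        (ρ * σ) * (2 / ρ) * (a ^ 2 * exp (-ρ * a)) * (a ^ 2 * exp (-σ * a))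
      = 2 * a * exp (-ε * a) := by
  have inner : ∀ σ : ℝ, ∫ ρ in Ioi ε,
        (ρ * σ) * (2 / ρ) * (a ^ 2 * exp (-ρ * a)) * (a ^ 2 * exp (-σ * a))
      = (2 * a ^ 3 * exp (-ε * a)) * (σ * exp (-σ * a)) := by
    intro σ
    rw [setIntegral_congr_fun measurableSet_Ioi
        (g := fun ρ => (2 * σ * a ^ 4 * exp (-σ * a)) * exp (-ρ * a)) fun ρ hρ => by
          have : ρ ≠ 0 := (hε.trans_lt hρ).ne'
          field_simp,
      integral_const_mul, integral_exp_neg_mul_Ioi ha]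
    field_simp
  simp only [inner, integral_const_mul, integral_mul_exp_neg_mul_Ioi_zero ha]
  field_simp

lemma loss_integral_exp (ε : ℝ) :
    ∫ ρ in Ioi (0 : ℝ), (ε * ρ) * (a ^ 2 * exp (-ε * a)) * (a ^ 2 * exp (-ρ * a))
      = ε * a ^ 2 * exp (-ε * a) := by
  simp_rw [show ∀ ρ, (ε * ρ) * (a ^ 2 * exp (-ε * a)) * (a ^ 2 * exp (-ρ * a))
      = (ε * a ^ 4 * exp (-ε * a)) * (ρ * exp (-ρ * a)) from fun ρ => by ring]
  rw [integral_const_mul, integral_mul_exp_neg_mul_Ioi_zero ha]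
  field_simp

end CollisionIntegrals

lemma hasDerivAt_sq_mul_exp (ε x : ℝ) :
    HasDerivAt (fun s => (1 + s) ^ 2 * exp (-ε * (1 + s)))
      (2 * (1 + x) * exp (-ε * (1 + x)) - ε * (1 + x) ^ 2 * exp (-ε * (1 + x))) x := by
  have h : HasDerivAt (fun s : ℝ => 1 + s) 1 x := (hasDerivAt_id x).const_add 1
  refine ((h.fun_pow 2).fun_mul (h.const_mul (-ε)).exp).congr_deriv ?_
  push_cast
  ring

theorem stmt_6 (f : ℝ → ℝ → ℝ)
    (hf : ∀ ς ε : ℝ, f ς ε = (1 + ς) ^ 2 * Real.exp (-ε * (1 + ς))) :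
    (∀ ε : ℝ, 0 < ε → f 0 ε = Real.exp (-ε)) ∧
      ∀ ς : ℝ, 0 ≤ ς → ∀ ε : ℝ, 0 < ε →
        HasDerivAt (fun s => f s ε)
          ((∫ σ in Set.Ioi (0:ℝ), ∫ ρ in Set.Ioi ε, (ρ * σ) * (2 / ρ) * f ς ρ * f ς σ)
            - ∫ ρ in Set.Ioi (0:ℝ), (ε * ρ) * f ς ε * f ς ρ) ς := by
  refine ⟨fun ε _ => by simp [hf], fun ς hς ε hε => ?_⟩
  have ha : 0 < 1 + ς := by linarith
  simp only [hf]
  rw [gain_integral_exp ha hε.le, loss_integral_exp ha]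
  convert hasDerivAt_sq_mul_exp ε ς using 1
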